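/- arXiv:2003.03605 — 2 statements merged into one kernel-verified Lean document; each statement's English description precedes it below -/
import Mathlib

section
/- For every graph G and even integer d = 2k with k ≥ 1, χ(G^d) ≤ ω(G^d)^2. -/
open SimpleGraph Set

variable {V : Type*}

/-- The `d`-th power of a graph: distinct vertices adjacent iff joined by a walk
of length at most `d`. -/
def gpow (G : SimpleGraph V) (d : ℕ) : SimpleGraph V where
  Adj u v := u ≠ v ∧ ∃ p : G.Walk u v, p.length ≤ d
  symm := by
    refine ⟨?_⟩
    rintro u v ⟨h, p, hp⟩
    exact ⟨h.symm, p.reverse, by simpa using hp⟩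
  loopless := by refine ⟨?_⟩; rintro u ⟨h, _⟩; exact h rfl

/-- `v` is weakly `r`-reachable from `u` with respect to the ordering `σ`:
there is a path (walk) of length at most `r` from `u` to `v` all of whose
vertices are `≥_σ v`. -/
def wreach (G : SimpleGraph V) (σ : V → ℕ) (r : ℕ) (u v : V) : Prop :=
  ∃ p : G.Walk u v, p.length ≤ r ∧ ∀ x ∈ p.support, σ v ≤ σ x

/-- The weak `r`-coloring number of the ordering `σ`. -/
noncomputable def wcolOrd (G : SimpleGraph V) (σ : V → ℕ) (r : ℕ) : ℕ :=
  sSup { n | ∃ u, n = {v | wreach G σ r u v}.ncard }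

/-- The weak `r`-coloring number of `G`: minimum over (injective) vertex orderings. -/
noncomputable def wcol (G : SimpleGraph V) (r : ℕ) : ℕ :=
  sInf { c | ∃ σ : V → ℕ, Function.Injective σ ∧ wcolOrd G σ r = c }

/-- The coloring number of the ordering `σ`: max over vertices of one plus
the number of earlier neighbors. -/
noncomputable def colOrd (G : SimpleGraph V) (σ : V → ℕ) : ℕ :=
  sSup { n | ∃ u, n = 1 + {v | G.Adj u v ∧ σ v < σ u}.ncard }

/-- The coloring number of `G` (one plus degeneracy). -/
noncomputable def colNum (G : SimpleGraph V) : ℕ :=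
  sInf { c | ∃ σ : V → ℕ, Function.Injective σ ∧ colOrd G σ = c }

/-- Maximum degree. -/
noncomputable def maxDeg (G : SimpleGraph V) : ℕ :=
  sSup { n | ∃ u, n = (G.neighborSet u).ncard }

/-- Clique number. -/
noncomputable def cliqueNum' (G : SimpleGraph V) : ℕ :=
  sSup { n | ∃ s : Finset V, G.IsNClique n s }

/-- A clustering of `H`: a partition of the vertex set into cliques. -/
def IsClustering (H : SimpleGraph V) (𝒳 : Set (Set V)) : Prop :=
  Setoid.IsPartition 𝒳 ∧ ∀ A ∈ 𝒳, H.IsClique A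

/-- The quotient graph `H/𝒳`: blocks are vertices, distinct blocks adjacent iff some
pair of their elements is adjacent in `H`. -/
def quotGraph (H : SimpleGraph V) (𝒳 : Set (Set V)) : SimpleGraph 𝒳 where
  Adj A B := A ≠ B ∧ ∃ a ∈ (A : Set V), ∃ b ∈ (B : Set V), H.Adj a b
  symm := by
    refine ⟨?_⟩
    rintro A B ⟨hne, a, ha, b, hb, hab⟩
    exact ⟨hne.symm, b, hb, a, ha, hab.symm⟩
  loopless := by refine ⟨?_⟩; rintro A ⟨h, _⟩; exact h rfl

/-- `S` induces a disjoint union of complete graphs in `H`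
(adjacency is transitive on `S`). -/
def IsClusterSet (H : SimpleGraph V) (S : Set V) : Prop :=
  ∀ a ∈ S, ∀ b ∈ S, ∀ c ∈ S, H.Adj a b → H.Adj b c → a ≠ c → H.Adj a c

/-- The subchromatic number: least `c` admitting a `c`-coloring in which every color
class induces a disjoint union of complete graphs. -/
noncomputable def subchrom (H : SimpleGraph V) : ℕ :=
  sInf { c | ∃ f : V → Fin c, ∀ i, IsClusterSet H (f ⁻¹' {i}) }

/-- A semi-ladder of length `k`: `x i` non-adjacent to `y i`, while `x i` adjacent
to `y j` whenever `i < j`. -/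
def IsSemiLadder (H : SimpleGraph V) {k : ℕ} (x y : Fin k → V) : Prop :=
  (∀ i, ¬ H.Adj (x i) (y i)) ∧ ∀ i j, i < j → H.Adj (x i) (y j)

/-- The semi-ladder index of `H` is at most `q`. -/
def semiLadderIndexLE (H : SimpleGraph V) (q : ℕ) : Prop :=
  ∀ (k : ℕ) (x y : Fin k → V), IsSemiLadder H x y → k ≤ q

/-- Closed neighborhood. -/
def closedNbhd (H : SimpleGraph V) (a : V) : Set V := insert a (H.neighborSet a)

/-- Treedepth at most `k`, via a forest (ancestor) order: a strict partial order in
which ancestors of each vertex form a chain of size `< k`, and every edge joins a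
comparable pair. -/
def treedepthLE (G : SimpleGraph V) (k : ℕ) : Prop :=
  ∃ A : V → V → Prop,
    (∀ u v w, A u v → A v w → A u w) ∧ (∀ v, ¬ A v v) ∧
    (∀ a b v, A a v → A b v → a = b ∨ A a b ∨ A b a) ∧
    (∀ u v, G.Adj u v → A u v ∨ A v u) ∧
    (∀ v, {a | A a v}.ncard < k)
/-
Write `H = G^k`. A closed `H`-neighbourhood is a clique of `G^{2k}`, so it has at most `ω`
vertices. Splitting a walk of length at most `2k` at its `k`-th vertex shows that the closed
`G^{2k}`-neighbourhood of `u` is covered by the closed `H`-neighbourhoods of the at most `ω`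
vertices of the closed `H`-neighbourhood of `u`; hence every vertex of `G^{2k}` has fewer than
`ω²` neighbours, and greedy colouring uses at most `ω²` colours.
-/

lemma Set.ncard_biUnion_le_mul {ι α : Type*} {s : Set ι} (hs : s.Finite) {t : ι → Set α} {m : ℕ}
    (h : ∀ i ∈ s, (t i).ncard ≤ m) : (⋃ i ∈ s, t i).ncard ≤ s.ncard * m := by
  calc (⋃ i ∈ s, t i).ncard = (⋃ i ∈ hs.toFinset, t i).ncard := by simp
    _ ≤ ∑ i ∈ hs.toFinset, (t i).ncard := hs.toFinset.set_ncard_biUnion_le t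
    _ ≤ hs.toFinset.card * m := Finset.sum_le_card_nsmul _ _ _ (by simpa using h)
    _ = s.ncard * m := by rw [Set.ncard_eq_toFinset_card s hs]

lemma exists_forall_apply_ne_of_ncard_lt {W : Type*} [Finite W] {n : ℕ} (C : W → Fin n)
    {N : Set W} (hN : N.ncard < n) : ∃ c, ∀ w ∈ N, C w ≠ c := by
  by_contra! hcov
  have hsurj : (Set.univ : Set (Fin n)) ⊆ C '' N := fun c _ => hcov c
  have := (Set.ncard_le_ncard hsurj).trans (Set.ncard_image_le N.toFinite)
  simp only [Set.ncard_univ, Nat.card_eq_fintype_card, Fintype.card_fin] at this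
  omega

namespace SimpleGraph

theorem colorable_of_forall_ncard_neighborSet_lt [Fintype V] (H : SimpleGraph V) {n : ℕ}
    (h : ∀ v, (H.neighborSet v).ncard < n) : H.Colorable n := by
  classical
  rcases n with _ | n
  · exact colorable_zero_iff.mpr ⟨fun v => by simpa using h v⟩
  suffices ∀ s : Finset V, ∃ C : V → Fin (n + 1), ∀ a ∈ s, ∀ b ∈ s, H.Adj a b → C a ≠ C b by
    obtain ⟨C, hC⟩ := this Finset.univ
    exact ⟨Coloring.mk C fun hab => hC _ (Finset.mem_univ _) _ (Finset.mem_univ _) hab⟩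
  intro s
  induction s using Finset.induction_on with
  | empty => exact ⟨fun _ => 0, by simp⟩
  | insert v s hv ih =>
    obtain ⟨C, hC⟩ := ih
    obtain ⟨c, hc⟩ := exists_forall_apply_ne_of_ncard_lt C (h v)
    refine ⟨Function.update C v c, ?_⟩
    intro a ha b hb hab
    simp only [Finset.mem_insert] at ha hb
    rcases ha with rfl | ha <;> rcases hb with rfl | hb
    · exact absurd hab (H.loopless.irrefl _)
    · simpa [Function.update_of_ne (ne_of_mem_of_not_mem hb hv)] using (hc b hab).symm
    · simpa [Function.update_of_ne (ne_of_mem_of_not_mem ha hv)] using hc a hab.symm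
    · simpa [Function.update_of_ne (ne_of_mem_of_not_mem ha hv),
        Function.update_of_ne (ne_of_mem_of_not_mem hb hv)] using hC a ha b hb hab

lemma IsClique.ncard_le_cliqueNum [Finite V] {H : SimpleGraph V} {s : Set V}
    (hs : H.IsClique s) : s.ncard ≤ H.cliqueNum := by
  have := Fintype.ofFinite V
  classical
  rw [Set.ncard_eq_toFinset_card']
  exact IsClique.card_le_cliqueNum (tc := by simpa using hs)

end SimpleGraph

section GraphPower

variable {G : SimpleGraph V}

lemma mem_closedNbhd_gpow {d : ℕ} {u v : V} :
    v ∈ closedNbhd (gpow G d) u ↔ ∃ p : G.Walk u v, p.length ≤ d := by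
  constructor
  · rintro (rfl | ⟨-, hp⟩)
    · exact ⟨.nil, Nat.zero_le d⟩
    · exact hp
  · rintro ⟨p, hp⟩
    by_cases huv : u = v
    · exact huv ▸ Set.mem_insert u _
    · exact Set.mem_insert_of_mem _ ⟨huv, p, hp⟩

lemma ncard_closedNbhd [Finite V] (H : SimpleGraph V) (u : V) :
    (closedNbhd H u).ncard = (H.neighborSet u).ncard + 1 :=
  Set.ncard_insert_of_notMem H.notMem_neighborSet_self

lemma isClique_closedNbhd_gpow (k : ℕ) (u : V) :
    (gpow G (2 * k)).IsClique (closedNbhd (gpow G k) u) := by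
  intro a ha b hb hab
  obtain ⟨p, hp⟩ := mem_closedNbhd_gpow.mp ha
  obtain ⟨q, hq⟩ := mem_closedNbhd_gpow.mp hb
  exact ⟨hab, p.reverse.append q, by simp only [Walk.length_append, Walk.length_reverse]; omega⟩

lemma closedNbhd_gpow_add_subset (k l : ℕ) (u : V) :
    closedNbhd (gpow G (k + l)) u ⊆ ⋃ w ∈ closedNbhd (gpow G k) u, closedNbhd (gpow G l) w := by
  intro v hv
  obtain ⟨p, hp⟩ := mem_closedNbhd_gpow.mp hv
  refine Set.mem_biUnion (x := p.getVert k) ?_ ?_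
  · exact mem_closedNbhd_gpow.mpr ⟨p.take k, by simp⟩
  · exact mem_closedNbhd_gpow.mpr ⟨p.drop k, by simp only [Walk.drop_length]; omega⟩

lemma ncard_closedNbhd_gpow_add_le [Finite V] {k l m : ℕ}
    (h : ∀ w, (closedNbhd (gpow G l) w).ncard ≤ m) (u : V) :
    (closedNbhd (gpow G (k + l)) u).ncard ≤ (closedNbhd (gpow G k) u).ncard * m :=
  (Set.ncard_le_ncard (closedNbhd_gpow_add_subset k l u)).trans
    (Set.ncard_biUnion_le_mul (Set.toFinite _) fun w _ => h w)

end GraphPower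

theorem stmt10_general [Fintype V] (G : SimpleGraph V) (k : ℕ) :
    (gpow G (2 * k)).chromaticNumber ≤ ((cliqueNum' (gpow G (2 * k))) ^ 2 : ℕ) := by
  set ω := cliqueNum' (gpow G (2 * k))
  -- `cliqueNum'` is definitionally Mathlib's `SimpleGraph.cliqueNum`.
  have hk : ∀ u, (closedNbhd (gpow G k) u).ncard ≤ ω := fun u =>
    (isClique_closedNbhd_gpow k u).ncard_le_cliqueNum
  have h2k : ∀ u, (closedNbhd (gpow G (2 * k)) u).ncard ≤ ω ^ 2 := fun u => by
    rw [two_mul, sq]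
    exact (ncard_closedNbhd_gpow_add_le hk u).trans (Nat.mul_le_mul_right ω (hk u))
  refine Colorable.chromaticNumber_le (colorable_of_forall_ncard_neighborSet_lt _ fun u => ?_)
  have := h2k u
  rw [ncard_closedNbhd] at this
  omega

/-- For even d = 2k with k ≥ 1, χ(G^d) ≤ ω(G^d)². -/
theorem stmt10 [Fintype V] (G : SimpleGraph V) (k : ℕ) (hk : 1 ≤ k) :
    (gpow G (2 * k)).chromaticNumber ≤ ((cliqueNum' (gpow G (2 * k))) ^ 2 : ℕ) :=
  stmt10_general G k
end

section
/- For every n ≥ 1 and d ≥ 1 there exists a graph G_{n,d} with (3/2)·C(2d,d)·n + 2d vertices and treedepth at most 2d+2 such that (G_{n,d})^2 has at least n^{(1/2)·C(2d,d)} distinct inclusion-wise maximal cliques. -/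
open SimpleGraph Set

variable {V : Type*}

namespace St18

abbrev SIdx (e : ℕ) := {s : Finset (Fin (2*e+1)) // s.card = e}

abbrev Vtx (e n : ℕ) := (SIdx e × Fin n × Fin 3) ⊕ Fin (2*(e+1))

def ISet {e : ℕ} (s : SIdx e) : Finset (Fin (2*(e+1))) :=
  insert 0 (Finset.map ⟨Fin.succ, Fin.succ_injective _⟩ s.1)

def Rel {e n : ℕ} : Vtx e n → Vtx e n → Prop
  | Sum.inl (s,_,t), Sum.inr a => (t = 0 ∧ a ∈ ISet s) ∨ (t = 2 ∧ a ∉ ISet s)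
  | Sum.inl (s,i,t), Sum.inl (s',i',t') => t = 1 ∧ s = s' ∧ i = i' ∧ (t' = 0 ∨ t' = 2)
  | _, _ => False

def Gnd (e n : ℕ) : SimpleGraph (Vtx e n) where
  Adj u v := u ≠ v ∧ (Rel u v ∨ Rel v u)
  symm := by refine ⟨?_⟩; rintro u v ⟨h, h'⟩; exact ⟨h.symm, h'.symm⟩
  loopless := by refine ⟨?_⟩; rintro u ⟨h, _⟩; exact h rfl

end St18
namespace St18

variable {e n : ℕ}

lemma walk_le_two {V : Type*} {G : SimpleGraph V} {u v : V} (p : G.Walk u v)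
    (hp : p.length ≤ 2) : u = v ∨ G.Adj u v ∨ ∃ w, G.Adj u w ∧ G.Adj w v := by
  match p with
  | .nil => exact Or.inl rfl
  | .cons h .nil => exact Or.inr (Or.inl h)
  | .cons h (.cons h' .nil) => exact Or.inr (Or.inr ⟨_, h, h'⟩)
  | .cons _ (.cons _ (.cons _ q)) => simp [SimpleGraph.Walk.length_cons] at hp

lemma gpow_adj_one {u v : Vtx e n} (h : (Gnd e n).Adj u v) : (gpow (Gnd e n) 2).Adj u v :=
  ⟨h.1, .cons h .nil, by simp⟩

lemma gpow_adj_two {u v w : Vtx e n} (hne : u ≠ v) (h1 : (Gnd e n).Adj u w)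
    (h2 : (Gnd e n).Adj w v) : (gpow (Gnd e n) 2).Adj u v :=
  ⟨hne, .cons h1 (.cons h2 .nil), by simp⟩

/-- neighbors of a side vertex -/
lemma adj_side {s : SIdx e} {i : Fin n} {t : Fin 3} (ht : t = 0 ∨ t = 2) {w : Vtx e n}
    (h : (Gnd e n).Adj (Sum.inl (s,i,t)) w) :
    (∃ a : Fin (2*(e+1)), w = Sum.inr a ∧ (t = 0 → a ∈ ISet s) ∧ (t = 2 → a ∉ ISet s)) ∨
      w = Sum.inl (s,i,1) := by
  obtain ⟨hne, h | h⟩ := h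
  · rcases w with ⟨s',i',t'⟩ | a
    · simp only [Rel] at h
      rcases ht with rfl | rfl <;> simp at h
    · simp only [Rel] at h
      rcases h with ⟨rfl, h⟩ | ⟨rfl, h⟩
      · exact Or.inl ⟨a, rfl, fun _ => h, fun hc => absurd hc (by decide)⟩
      · exact Or.inl ⟨a, rfl, fun hc => absurd hc (by decide), fun _ => h⟩
  · rcases w with ⟨s',i',t'⟩ | a
    · simp only [Rel] at h
      obtain ⟨h1, rfl, rfl, h4⟩ := h
      exact Or.inr (by rw [h1])
    · simp only [Rel] at h

/-- Key non-adjacency: same partition, opposite sides, different indices. -/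
lemma not_gpow_adj {s : SIdx e} {i i' : Fin n} (hii : i ≠ i') :
    ¬ (gpow (Gnd e n) 2).Adj (Sum.inl (s,i,0)) (Sum.inl (s,i',2)) := by
  rintro ⟨hne, p, hp⟩
  rcases walk_le_two p hp with h | h | ⟨w, h1, h2⟩
  · exact hne h
  · rcases adj_side (Or.inl rfl) h with ⟨a, ha, _, _⟩ | h'
    · exact (Sum.inl_ne_inr ha).elim
    · simp at h'
  · rcases adj_side (Or.inl rfl) h1 with ⟨a, rfl, hI, _⟩ | rfl
    · rcases adj_side (Or.inr rfl) h2.symm with ⟨a', ha', _, hJ⟩ | h'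
      · obtain rfl : a = a' := by simpa using ha'
        exact hJ rfl (hI rfl)
      · exact Sum.inr_ne_inl h'
    · rcases adj_side (Or.inr rfl) h2.symm with ⟨a', ha', _, _⟩ | h'
      · exact (Sum.inl_ne_inr ha').elim
      · simp only [Sum.inl.injEq, Prod.mk.injEq] at h'
        exact hii h'.2.1

lemma zero_mem_ISet (s : SIdx e) : (0 : Fin (2*(e+1))) ∈ ISet s :=
  Finset.mem_insert_self _ _

lemma exists_mem_not_mem {s s' : SIdx e} (hss : s ≠ s') :
    ∃ a, a ∈ ISet s ∧ a ∉ ISet s' := by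
  have hsub : ¬ s.1 ⊆ s'.1 := by
    intro h
    exact hss (Subtype.ext (Finset.eq_of_subset_of_card_le h (by rw [s.2, s'.2])))
  obtain ⟨b, hb, hb'⟩ := Finset.not_subset.mp hsub
  refine ⟨b.succ, Finset.mem_insert_of_mem ?_, ?_⟩
  · exact Finset.mem_map_of_mem _ hb
  · intro hmem
    rcases Finset.mem_insert.mp hmem with h0 | hmap
    · exact Fin.succ_ne_zero b h0
    · obtain ⟨c, hc, hcb⟩ := Finset.mem_map.mp hmap
      obtain rfl : c = b := Fin.succ_injective _ hcb
      exact hb' hc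

lemma exists_not_mem_not_mem (s s' : SIdx e) :
    ∃ a, a ∉ ISet s ∧ a ∉ ISet s' := by
  classical
  have hsub : ISet s ∪ ISet s' ⊆
      insert 0 ((s.1 ∪ s'.1).map ⟨Fin.succ, Fin.succ_injective _⟩) := by
    intro a ha
    rcases Finset.mem_union.mp ha with h | h <;>
      rcases Finset.mem_insert.mp h with h0 | hmap <;>
      [exact h0 ▸ Finset.mem_insert_self _ _;
       skip; exact h0 ▸ Finset.mem_insert_self _ _; skip] <;>
      · obtain ⟨c, hc, hcb⟩ := Finset.mem_map.mp hmap
        exact Finset.mem_insert_of_mem (Finset.mem_map.mpr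
          ⟨c, by simp [Finset.mem_union, hc, Finset.mem_union.mpr], hcb⟩)
  have hcard : (ISet s ∪ ISet s').card < Fintype.card (Fin (2*(e+1))) := by
    have h1 : (ISet s ∪ ISet s').card ≤
        ((s.1 ∪ s'.1).map ⟨Fin.succ, Fin.succ_injective _⟩).card + 1 :=
      le_trans (Finset.card_le_card hsub) (Finset.card_insert_le _ _)
    rw [Finset.card_map] at h1
    have h2 : (s.1 ∪ s'.1).card ≤ e + e := by
      calc (s.1 ∪ s'.1).card ≤ s.1.card + s'.1.card := Finset.card_union_le _ _
        _ = e + e := by rw [s.2, s'.2]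
    simp only [Fintype.card_fin]
    omega
  have : ((ISet s ∪ ISet s')ᶜ).Nonempty := by
    rw [← Finset.card_pos, Finset.card_compl]
    omega
  obtain ⟨a, ha⟩ := this
  rw [Finset.mem_compl, Finset.mem_union] at ha
  push_neg at ha
  exact ⟨a, ha⟩

lemma adj_mid {s : SIdx e} {i : Fin n} {t : Fin 3} (ht : t = 0 ∨ t = 2) :
    (Gnd e n).Adj (Sum.inl (s,i,1)) (Sum.inl (s,i,t)) := by
  refine ⟨?_, Or.inl ⟨rfl, rfl, rfl, ht⟩⟩
  rcases ht with rfl | rfl <;> simp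

lemma adj_side_A {s : SIdx e} {i : Fin n} {t : Fin 3} {a : Fin (2*(e+1))}
    (ht : t = 0 ∨ t = 2) (h0 : t = 0 → a ∈ ISet s) (h2 : t = 2 → a ∉ ISet s) :
    (Gnd e n).Adj (Sum.inl (s,i,t)) (Sum.inr a) := by
  refine ⟨by simp, Or.inl ?_⟩
  rcases ht with rfl | rfl
  · exact Or.inl ⟨rfl, h0 rfl⟩
  · exact Or.inr ⟨rfl, h2 rfl⟩

def Sf (f : SIdx e → Fin n) : Set (Vtx e n) :=
  {v | ∃ s : SIdx e, ∃ t : Fin 3, (t = 0 ∨ t = 2) ∧ v = Sum.inl (s, f s, t)}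

lemma Sf_clique (f : SIdx e → Fin n) : (gpow (Gnd e n) 2).IsClique (Sf f) := by
  rintro u ⟨s, t, ht, rfl⟩ v ⟨s', t', ht', rfl⟩ hne
  by_cases hss : s = s'
  · subst hss
    exact gpow_adj_two hne ((adj_mid ht).symm) (adj_mid ht')
  · have key : ∃ a, (t = 0 → a ∈ ISet s) ∧ (t = 2 → a ∉ ISet s) ∧
        (t' = 0 → a ∈ ISet s') ∧ (t' = 2 → a ∉ ISet s') := by
      rcases ht with rfl | rfl <;> rcases ht' with rfl | rfl
      · exact ⟨0, fun _ => zero_mem_ISet s, fun h => absurd h (by decide),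
          fun _ => zero_mem_ISet s', fun h => absurd h (by decide)⟩
      · obtain ⟨a, h1, h2⟩ := exists_mem_not_mem hss
        exact ⟨a, fun _ => h1, fun h => absurd h (by decide),
          fun h => absurd h (by decide), fun _ => h2⟩
      · obtain ⟨a, h1, h2⟩ := exists_mem_not_mem (Ne.symm hss)
        exact ⟨a, fun h => absurd h (by decide), fun _ => h2,
          fun _ => h1, fun h => absurd h (by decide)⟩
      · obtain ⟨a, h1, h2⟩ := exists_not_mem_not_mem s s'
        exact ⟨a, fun h => absurd h (by decide), fun _ => h1,
          fun h => absurd h (by decide), fun _ => h2⟩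
    obtain ⟨a, h1, h2, h3, h4⟩ := key
    exact gpow_adj_two hne (adj_side_A ht h1 h2) ((adj_side_A ht' h3 h4).symm)

def Anc {e n : ℕ} : Vtx e n → Vtx e n → Prop
  | Sum.inr a, Sum.inr b => a < b
  | Sum.inr _, Sum.inl _ => True
  | Sum.inl (s,i,t), Sum.inl (s',i',t') => t = 1 ∧ s = s' ∧ i = i' ∧ (t' = 0 ∨ t' = 2)
  | Sum.inl _, Sum.inr _ => False

lemma ncard_range_inr : (Set.range (Sum.inr : Fin (2*(e+1)) → Vtx e n)).ncard = 2*(e+1) := by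
  rw [← Set.image_univ, Set.ncard_image_of_injective _ Sum.inr_injective,
    Set.ncard_univ, Nat.card_eq_fintype_card, Fintype.card_fin]

lemma treedepth_bound : treedepthLE (Gnd e n) (2*(e+1)+2) := by
  refine ⟨Anc, ?_, ?_, ?_, ?_, ?_⟩
  · rintro (⟨s,i,t⟩|a) (⟨s',i',t'⟩|b) (⟨s'',i'',t''⟩|c) h1 h2
    · obtain ⟨_, _, _, h⟩ := h1
      obtain ⟨rfl, _⟩ := h2
      rcases h with h | h <;> simp at h
    · exact h2.elim
    · exact h1.elim
    · exact h1.elim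
    · trivial
    · exact h2.elim
    · trivial
    · exact lt_trans h1 h2
  · rintro (⟨s,i,t⟩|a) h
    · obtain ⟨rfl, _, _, h⟩ := h
      rcases h with h | h <;> simp at h
    · exact lt_irrefl _ h
  · rintro (⟨s,i,t⟩|a) (⟨s',i',t'⟩|b) (⟨s'',i'',t''⟩|c) h1 h2
    · obtain ⟨rfl, rfl, rfl, _⟩ := h1
      obtain ⟨rfl, rfl, rfl, _⟩ := h2
      exact Or.inl rfl
    · exact h1.elim
    · exact Or.inr (Or.inr trivial)
    · exact h1.elim
    · exact Or.inr (Or.inl trivial)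
    · exact h2.elim
    · rcases lt_trichotomy a b with h | h | h
      · exact Or.inr (Or.inl h)
      · exact Or.inl (by rw [h])
      · exact Or.inr (Or.inr h)
    · rcases lt_trichotomy a b with h | h | h
      · exact Or.inr (Or.inl h)
      · exact Or.inl (by rw [h])
      · exact Or.inr (Or.inr h)
  · rintro (⟨s,i,t⟩|a) (⟨s',i',t'⟩|b) ⟨hne, h | h⟩
    · exact Or.inl h
    · exact Or.inr h
    · exact Or.inr trivial
    · exact (h : False).elim
    · exact (h : False).elim
    · exact Or.inl trivial
    · exact (h : False).elim
    · exact (h : False).elim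
  · rintro (⟨s,i,t⟩|b)
    · have hsub : {a | Anc a (Sum.inl (s,i,t) : Vtx e n)} ⊆
          Set.range (Sum.inr : Fin (2*(e+1)) → Vtx e n) ∪ {Sum.inl (s,i,1)} := by
        rintro (⟨s',i',t'⟩|a) h
        · obtain ⟨rfl, rfl, rfl, _⟩ := h
          exact Or.inr rfl
        · exact Or.inl ⟨a, rfl⟩
      have := Set.ncard_le_ncard hsub (Set.toFinite _)
      have h2 := Set.ncard_union_le (Set.range (Sum.inr : Fin (2*(e+1)) → Vtx e n))
        {(Sum.inl (s,i,1) : Vtx e n)}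
      rw [ncard_range_inr, Set.ncard_singleton] at h2
      omega
    · have hsub : {a | Anc a (Sum.inr b : Vtx e n)} ⊆
          Set.range (Sum.inr : Fin (2*(e+1)) → Vtx e n) := by
        rintro (⟨s',i',t'⟩|a) h
        · exact h.elim
        · exact ⟨a, rfl⟩
      have := Set.ncard_le_ncard hsub (Set.toFinite _)
      rw [ncard_range_inr] at this
      omega

lemma exists_max_clique {W : Type*} [Finite W] {G : SimpleGraph W} {S : Set W}
    (hS : G.IsClique S) :
    ∃ K, G.IsClique K ∧ (∀ K', G.IsClique K' → K ⊆ K' → K = K') ∧ S ⊆ K := by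
  obtain ⟨K, hK, hmax⟩ := Set.Finite.exists_maximalFor id {K : Set W | G.IsClique K ∧ S ⊆ K}
    (Set.toFinite _) ⟨S, hS, subset_rfl⟩
  exact ⟨K, hK.1, fun K' hK' hsub => subset_antisymm hsub (hmax ⟨hK', hK.2.trans hsub⟩ hsub), hK.2⟩

lemma card_SIdx : Fintype.card (SIdx e) = (2*e+1).choose e := by
  rw [Fintype.card_finset_len, Fintype.card_fin]

lemma choose_half : (2*(e+1)).choose (e+1) / 2 = (2*e+1).choose e := by
  have h := Nat.add_one_mul_choose_eq (2*e+1) e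
  have h2 : 2*(e+1) = 2*e+1+1 := by ring
  have h3 : (2*(e+1)).choose (e+1) = 2 * ((2*e+1).choose e) := by
    rw [h2]
    have h4 : (e+1) * (2 * ((2*e+1).choose e)) = (e+1) * ((2*e+1+1).choose (e+1)) := by
      calc (e+1) * (2 * ((2*e+1).choose e)) = (2*e+1+1) * ((2*e+1).choose e) := by ring
        _ = (2*e+1+1).choose (e+1) * (e+1) := h
        _ = (e+1) * ((2*e+1+1).choose (e+1)) := by ring
    exact (Nat.eq_of_mul_eq_mul_left (Nat.succ_pos e) h4).symm
  omega

lemma main_count :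
    n ^ ((2*e+1).choose e) ≤
      {K : Set (Vtx e n) | (gpow (Gnd e n) 2).IsClique K ∧
        ∀ K', (gpow (Gnd e n) 2).IsClique K' → K ⊆ K' → K = K'}.ncard := by
  classical
  set M := {K : Set (Vtx e n) | (gpow (Gnd e n) 2).IsClique K ∧
        ∀ K', (gpow (Gnd e n) 2).IsClique K' → K ⊆ K' → K = K'} with hM
  have hex := fun f : SIdx e → Fin n => exists_max_clique (Sf_clique f)
  choose K hK1 hK2 hK3 using hex
  have hF : ∀ f, K f ∈ M := fun f => ⟨hK1 f, hK2 f⟩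
  set F : (SIdx e → Fin n) → M := fun f => ⟨K f, hF f⟩ with hFdef
  have hinj : Function.Injective F := by
    intro f f' h
    by_contra hff
    obtain ⟨s, hs⟩ := Function.ne_iff.mp hff
    have hx : (Sum.inl (s, f s, 0) : Vtx e n) ∈ K f :=
      hK3 f ⟨s, 0, Or.inl rfl, rfl⟩
    have hy : (Sum.inl (s, f' s, 2) : Vtx e n) ∈ K f' :=
      hK3 f' ⟨s, 2, Or.inr rfl, rfl⟩
    have hKeq : K f = K f' := congrArg Subtype.val h
    rw [hKeq] at hx
    have hadj := hK1 f' hx hy (by simp)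
    exact not_gpow_adj hs hadj
  have hcard := Nat.card_le_card_of_injective F hinj
  rw [Nat.card_fun, Nat.card_coe_set_eq] at hcard
  simpa [Nat.card_eq_fintype_card, card_SIdx] using hcard

end St18


/-- For all n, d ≥ 1 there is a graph with (3/2)·C(2d,d)·n + 2d vertices and treedepth
at most 2d+2 whose square has at least n^{(1/2)·C(2d,d)} maximal cliques. -/
theorem stmt18 (n d : ℕ) (hn : 1 ≤ n) (hd : 1 ≤ d) :
    ∃ (V : Type) (_ : Fintype V) (G : SimpleGraph V),
      Fintype.card V = 3 * (Nat.choose (2 * d) d / 2) * n + 2 * d ∧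
      treedepthLE G (2 * d + 2) ∧
      n ^ (Nat.choose (2 * d) d / 2) ≤
        {K : Set V | (gpow G 2).IsClique K ∧
          ∀ K', (gpow G 2).IsClique K' → K ⊆ K' → K = K'}.ncard := by
  obtain ⟨e, rfl⟩ : ∃ e, d = e + 1 := ⟨d - 1, by omega⟩
  refine ⟨St18.Vtx e n, inferInstance, St18.Gnd e n, ?_, St18.treedepth_bound, ?_⟩
  · rw [St18.choose_half]
    simp only [Fintype.card_sum, Fintype.card_prod, Fintype.card_fin, St18.card_SIdx]
    ring
  · rw [St18.choose_half]
    exact St18.main_count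
end
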